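/- In the random model with B-irreducible probability matrices, for every t ≥ 0 the probability that the matrix Σ_{t'=tB}^{(t+1)B−1} W(t') is irreducible is at least ε^{2(n−1)}. -/

import Mathlib

open Finset MeasureTheory

/-- `A_{S S̄} = ∑_{i ∈ S, j ∉ S} A i j`. -/
def flowSum {n : ℕ} (A : Matrix (Fin n) (Fin n) ℝ) (S : Finset (Fin n)) : ℝ :=
  ∑ i ∈ S, ∑ j ∈ Sᶜ, A i j

/-- `S` is a nontrivial subset of `[n]`. -/
def NontrivialSubset {n : ℕ} (S : Finset (Fin n)) : Prop :=
  S.Nonempty ∧ S ≠ Finset.univ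

/-- Directed infinite flow property: for every nontrivial `S`, `∑_t A_{S S̄}(t) = ∞`. -/
def DirectedInfiniteFlow {n : ℕ} (A : ℕ → Matrix (Fin n) (Fin n) ℝ) : Prop :=
  ∀ S : Finset (Fin n), NontrivialSubset S →
    Filter.Tendsto (fun T => ∑ t ∈ Finset.range T, flowSum (A t) S)
      Filter.atTop Filter.atTop

/-- The backward product `A(t:s) = A(t) A(t-1) ⋯ A(s)`. -/
def matProd {n : ℕ} (A : ℕ → Matrix (Fin n) (Fin n) ℝ) (t s : ℕ) :
    Matrix (Fin n) (Fin n) ℝ :=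
  (((List.range (t + 1 - s)).map fun k => A (t - k))).prod

/-- Row-stochastic nonnegative matrix. -/
def RowStochastic {n : ℕ} (A : Matrix (Fin n) (Fin n) ℝ) : Prop :=
  (∀ i j, 0 ≤ A i j) ∧ ∀ i, ∑ j, A i j = 1

/-- Column-stochastic nonnegative matrix. -/
def ColStochastic {n : ℕ} (A : Matrix (Fin n) (Fin n) ℝ) : Prop :=
  (∀ i j, 0 ≤ A i j) ∧ ∀ j, ∑ i, A i j = 1

/-- `W` is the degree-normalized adjacency matrix of a digraph with all self-loops:
`W i j = 1 / (out-degree of j)` if there is an edge from `j` to `i`, else `0`. -/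
def OutDegreeForm {n : ℕ} (W : Matrix (Fin n) (Fin n) ℝ) : Prop :=
  ∃ N : Fin n → Finset (Fin n), (∀ j, j ∈ N j) ∧
    ∀ i j, W i j = if i ∈ N j then (1 : ℝ) / (N j).card else 0

/-- Strong aperiodicity of a sequence of matrices. -/
def StronglyAperiodic {n : ℕ} (A : ℕ → Matrix (Fin n) (Fin n) ℝ) : Prop :=
  ∃ γ : ℝ, 0 < γ ∧ ∀ t i, γ ≤ A t i i

/-- The times `k_q`: `k_0 = 0` and `k_q` is the least `t' > k_{q-1}` with
nonzero flow `∑_{t=k_{q-1}}^{t'-1} A_{S S̄}(t) > 0` across every nontrivial cut. -/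
noncomputable def kSeq {n : ℕ} (A : ℕ → Matrix (Fin n) (Fin n) ℝ) : ℕ → ℕ
  | 0 => 0
  | q + 1 => sInf {t' : ℕ | kSeq A q < t' ∧ ∀ S : Finset (Fin n), NontrivialSubset S →
      0 < ∑ t ∈ Finset.Ico (kSeq A q) t', flowSum (A t) S}

/-- `ℓ_q = k_{qn} - k_{(q-1)n}`. -/
noncomputable def ellSeq {n : ℕ} (A : ℕ → Matrix (Fin n) (Fin n) ℝ) (q : ℕ) : ℕ :=
  kSeq A (q * n) - kSeq A ((q - 1) * n)

/-- The index set `Q_{t,s} = {q ≥ 1 : s ≤ k_{(q-1)n}, k_{qn} ≤ t}` (as a `Finset`). -/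
noncomputable def QSet {n : ℕ} (A : ℕ → Matrix (Fin n) (Fin n) ℝ) (t s : ℕ) :
    Finset ℕ :=
  (Finset.Icc 1 t).filter fun q => s ≤ kSeq A ((q - 1) * n) ∧ kSeq A (q * n) ≤ t

/-- `Λ_{t,s} = ∏_{q ∈ Q_{t,s}} (1 - 1/n^{ℓ_q})`. -/
noncomputable def Lam {n : ℕ} (A : ℕ → Matrix (Fin n) (Fin n) ℝ) (t s : ℕ) : ℝ :=
  ∏ q ∈ QSet A t s, (1 - 1 / (n : ℝ) ^ (ellSeq A q))

/-- Push-sum iterates: `u(0) = u0`, `u(t+1) = W(t) u(t)`. -/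
def pushIter {n : ℕ} (W : ℕ → Matrix (Fin n) (Fin n) ℝ) (u0 : Fin n → ℝ) : ℕ → Fin n → ℝ
  | 0 => u0
  | t + 1 => (W t).mulVec (pushIter W u0 t)

/-- A nonnegative matrix is irreducible if the digraph with an edge from `j` to `i`
whenever `A i j > 0` is strongly connected. -/
def IrreducibleMat {n : ℕ} (A : Matrix (Fin n) (Fin n) ℝ) : Prop :=
  ∀ i j : Fin n, Relation.ReflTransGen (fun a b => 0 < A b a) i j


/-- The random column-stochastic matrix built from the Bernoulli variables `R`:
`W(t)(ω)_{ij} = R_{ij}(t)(ω) / ∑_k R_{kj}(t)(ω)`. -/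
noncomputable def Wof {n : ℕ} {Ω : Type*} (R : ℕ → Fin n → Fin n → Ω → ℝ)
    (t : ℕ) (ω : Ω) : Matrix (Fin n) (Fin n) ℝ :=
  fun i j => R t i j ω / ∑ k, R t k j ω

/-
Irreducibility of `∑ P` over the window is witnessed by a spanning out-tree and a spanning in-tree
at a common root: at most `2(n-1)` positive entries, each coming from some `P(s)` with `s` in the
window and hence of probability at least `ε`. If the corresponding Bernoulli variables all equal
`1`, those entries of `∑ W` are positive too, so `∑ W` is irreducible; by independence this event
has probability at least `ε^{2(n-1)}`.
-/

section SpanningSubgraph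

variable {α : Type*} {G : α → α → Prop}

theorem exists_edge_out_of_reflTransGen {S : Set α} {a b : α} (h : Relation.ReflTransGen G a b)
    (ha : a ∈ S) (hb : b ∉ S) : ∃ c ∈ S, ∃ w ∉ S, G c w := by
  induction h with
  | refl => exact absurd ha hb
  | @tail c _ _ hcb ih =>
    by_cases hc : c ∈ S
    · exact ⟨c, hc, _, hb, hcb⟩
    · exact ih hc

variable [Fintype α] [DecidableEq α]

theorem exists_partial_out_tree {r : α} (hr : ∀ v, Relation.ReflTransGen G r v) :
    ∀ k < Fintype.card α, ∃ (S : Finset α) (F : Finset (α × α)), r ∈ S ∧ S.card = k + 1 ∧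
      F.card ≤ k ∧ (∀ e ∈ F, G e.1 e.2) ∧
      ∀ v ∈ S, Relation.ReflTransGen (fun a b => (a, b) ∈ F) r v := by
  intro k hk
  induction k with
  | zero =>
    refine ⟨{r}, ∅, Finset.mem_singleton_self r, rfl, le_rfl, by simp, fun v hv => ?_⟩
    rw [Finset.mem_singleton.mp hv]
  | succ k ih =>
    obtain ⟨S, F, hrS, hS, hF, hFG, hFr⟩ := ih (by omega)
    obtain ⟨v, -, hv⟩ := Finset.exists_mem_notMem_of_card_lt_card (s := S) (t := Finset.univ)
      (by rw [Finset.card_univ]; omega)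
    obtain ⟨c, hc, w, hw, hcw⟩ := exists_edge_out_of_reflTransGen (S := ↑S) (hr v) hrS hv
    have hmono : ∀ u, Relation.ReflTransGen (fun a b => (a, b) ∈ F) r u →
        Relation.ReflTransGen (fun a b => (a, b) ∈ insert (c, w) F) r u :=
      fun u => Relation.ReflTransGen.mono (fun a b h => Finset.mem_insert_of_mem h) r u
    refine ⟨insert w S, insert (c, w) F, Finset.mem_insert_of_mem hrS, ?_, ?_, ?_, ?_⟩
    · rw [Finset.card_insert_of_notMem (by simpa using hw), hS]
    · exact (Finset.card_insert_le _ _).trans (by omega)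
    · simpa [hcw] using hFG
    · rw [Finset.forall_mem_insert]
      exact ⟨(hmono c (hFr c hc)).tail (Finset.mem_insert_self _ _),
        fun u hu => hmono u (hFr u hu)⟩

theorem exists_spanning_out_tree {r : α} (hr : ∀ v, Relation.ReflTransGen G r v) :
    ∃ F : Finset (α × α), F.card ≤ Fintype.card α - 1 ∧ (∀ e ∈ F, G e.1 e.2) ∧
      ∀ v, Relation.ReflTransGen (fun a b => (a, b) ∈ F) r v := by
  have hpos : 0 < Fintype.card α := Fintype.card_pos_iff.mpr ⟨r⟩
  obtain ⟨S, F, -, hS, hF, hFG, hFr⟩ := exists_partial_out_tree hr _ (Nat.sub_lt hpos one_pos)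
  have hSuniv : S = Finset.univ := Finset.eq_univ_of_card S (by omega)
  exact ⟨F, hF, hFG, fun v => hFr v (hSuniv ▸ Finset.mem_univ v)⟩

theorem exists_strongly_connected_subgraph [Nonempty α]
    (hG : ∀ a b, Relation.ReflTransGen G a b) :
    ∃ F : Finset (α × α), F.card ≤ 2 * (Fintype.card α - 1) ∧ (∀ e ∈ F, G e.1 e.2) ∧
      ∀ a b, Relation.ReflTransGen (fun a b => (a, b) ∈ F) a b := by
  obtain ⟨r⟩ := ‹Nonempty α›
  obtain ⟨Fout, hFout, hFoutG, hFoutr⟩ := exists_spanning_out_tree (hG r)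
  obtain ⟨Frev, hFrev, hFrevG, hFrevr⟩ := exists_spanning_out_tree (G := Function.swap G)
    (fun v => Relation.reflTransGen_swap.mpr (hG v r))
  refine ⟨Fout ∪ Frev.image Prod.swap, ?_, ?_, fun a b => ?_⟩
  · calc (Fout ∪ Frev.image Prod.swap).card ≤ Fout.card + Frev.card :=
          (Finset.card_union_le _ _).trans (Nat.add_le_add_left Finset.card_image_le _)
      _ ≤ 2 * (Fintype.card α - 1) := by omega
  · simp only [Finset.mem_union, Finset.mem_image]
    rintro e (he | ⟨f, hf, rfl⟩)
    exacts [hFoutG e he, hFrevG f hf]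
  · have hin : Relation.ReflTransGen (fun a b => (a, b) ∈ Frev.image Prod.swap) a r :=
      Relation.reflTransGen_swap.mp <| Relation.ReflTransGen.mono
        (fun x y h => Finset.mem_image.mpr ⟨(x, y), h, rfl⟩) r a (hFrevr a)
    exact (Relation.ReflTransGen.mono (fun x y h => Finset.mem_union_right _ h) a r hin).trans
      (Relation.ReflTransGen.mono (fun x y h => Finset.mem_union_left _ h) r b (hFoutr b))

end SpanningSubgraph

theorem IrreducibleMat.exists_sparse_witness {n : ℕ} [NeZero n]
    {A : Matrix (Fin n) (Fin n) ℝ} (hA : IrreducibleMat A) :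
    ∃ F : Finset (Fin n × Fin n), F.card ≤ 2 * (n - 1) ∧ (∀ e ∈ F, 0 < A e.2 e.1) ∧
      ∀ M : Matrix (Fin n) (Fin n) ℝ, (∀ e ∈ F, 0 < M e.2 e.1) → IrreducibleMat M := by
  obtain ⟨F, hF, hFA, hFirr⟩ := exists_strongly_connected_subgraph hA
  refine ⟨F, by simpa using hF, hFA, fun M hM i j => ?_⟩
  exact Relation.ReflTransGen.mono (fun a b h => hM (a, b) h) i j (hFirr i j)

theorem Matrix.exists_pos_of_sum_apply_pos {ι m n : Type*} {s : Finset ι}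
    {A : ι → Matrix m n ℝ} {i : m} {j : n} (h : 0 < (∑ k ∈ s, A k) i j) :
    ∃ k ∈ s, 0 < A k i j := by
  rw [Matrix.sum_apply] at h
  exact Finset.exists_lt_of_sum_lt (f := 0) (by simpa using h)

section RandomMatrix

variable {n : ℕ} {Ω : Type*} {R : ℕ → Fin n → Fin n → Ω → ℝ} {ω : Ω}

theorem Wof_nonneg (hR : ∀ t i j, 0 ≤ R t i j ω) (t : ℕ) (i j : Fin n) :
    0 ≤ Wof R t ω i j :=
  div_nonneg (hR t i j) (Finset.sum_nonneg fun k _ => hR t k j)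

theorem Wof_pos (hR : ∀ t i j, 0 ≤ R t i j ω) {t : ℕ} {i j : Fin n} (h : 0 < R t i j ω) :
    0 < Wof R t ω i j :=
  div_pos h (h.trans_le (Finset.single_le_sum (fun k _ => hR t k j) (Finset.mem_univ i)))

theorem sum_Wof_pos (hR : ∀ t i j, 0 ≤ R t i j ω) {I : Finset ℕ} {t : ℕ} (ht : t ∈ I)
    {i j : Fin n} (h : 0 < R t i j ω) : 0 < (∑ s ∈ I, Wof R s ω) i j := by
  rw [Matrix.sum_apply]
  exact Finset.sum_pos' (fun s _ => Wof_nonneg hR s i j) ⟨t, ht, Wof_pos hR h⟩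

end RandomMatrix

theorem ProbabilityTheory.iIndepFun.pow_le_measure_biInter {ι Ω β : Type*}
    [MeasurableSpace Ω] {μ : Measure Ω} [MeasurableSpace β] {X : ι → Ω → β}
    (hX : iIndepFun X μ) {T : Finset ι} {s : ι → Set β} (hs : ∀ i ∈ T, MeasurableSet (s i))
    {c : ENNReal} (hc : c ≤ 1) {k : ℕ} (hk : T.card ≤ k) (hlow : ∀ i ∈ T, c ≤ μ (X i ⁻¹' s i)) :
    c ^ k ≤ μ (⋂ i ∈ T, X i ⁻¹' s i) :=
  calc c ^ k ≤ c ^ T.card := pow_le_pow_of_le_one zero_le hc hk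
    _ = ∏ _i ∈ T, c := (Finset.prod_const c).symm
    _ ≤ ∏ i ∈ T, μ (X i ⁻¹' s i) := Finset.prod_le_prod' hlow
    _ = μ (⋂ i ∈ T, X i ⁻¹' s i) :=
      (hX.meas_biInter fun i hi => ⟨s i, hs i hi, rfl⟩).symm

theorem random_model_irreducible_prob_general
    {Ω : Type*} [MeasurableSpace Ω] (μ : MeasureTheory.Measure Ω)
    [MeasureTheory.IsProbabilityMeasure μ]
    {n : ℕ} (hn : 2 ≤ n) (ε : ℝ) (hε : 0 < ε) (B : ℕ)
    (P : ℕ → Matrix (Fin n) (Fin n) ℝ)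
    (hPdiag : ∀ t i, P t i i = 1)
    (hPeps : ∀ t i j, P t i j ≠ 0 → ε ≤ P t i j)
    (hPirr : ∀ t : ℕ, IrreducibleMat (∑ t' ∈ Finset.Ico (t * B) ((t + 1) * B), P t'))
    (R : ℕ → Fin n → Fin n → Ω → ℝ)
    (hR01 : ∀ t i j ω, R t i j ω = 0 ∨ R t i j ω = 1)
    (hRP : ∀ t i j, μ {ω | R t i j ω = 1} = ENNReal.ofReal (P t i j))
    (hindep : ProbabilityTheory.iIndepFun
      (m := fun _ : ℕ × Fin n × Fin n => Real.measurableSpace)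
      (fun p ω => R p.1 p.2.1 p.2.2 ω) μ)
    :
    ∀ t : ℕ, ENNReal.ofReal (ε ^ (2 * (n - 1))) ≤
      μ {ω | IrreducibleMat (∑ t' ∈ Finset.Ico (t * B) ((t + 1) * B), Wof R t' ω)} := by
  intro t
  have : NeZero n := ⟨by omega⟩
  have hε1 : ε ≤ 1 := by simpa [hPdiag] using hPeps 0 0 0 (by simp [hPdiag])
  have hR : ∀ ω s i j, 0 ≤ R s i j ω := fun ω s i j => by
    rcases hR01 s i j ω with h | h <;> simp [h]
  obtain ⟨F, hFcard, hFpos, hFirr⟩ := (hPirr t).exists_sparse_witness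
  choose! τ hτI hτpos using fun e he => Matrix.exists_pos_of_sum_apply_pos (hFpos e he)
  set T := F.image fun e => (τ e, e.2, e.1)
  calc ENNReal.ofReal (ε ^ (2 * (n - 1))) = ENNReal.ofReal ε ^ (2 * (n - 1)) :=
        ENNReal.ofReal_pow hε.le _
    _ ≤ μ (⋂ p ∈ T, (fun ω => R p.1 p.2.1 p.2.2 ω) ⁻¹' {1}) := by
      refine hindep.pow_le_measure_biInter (fun _ _ => measurableSet_singleton 1)
        (ENNReal.ofReal_le_one.mpr hε1) (Finset.card_image_le.trans hFcard) ?_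
      simp only [T, Finset.forall_mem_image]
      intro e he
      simp only [Set.preimage, Set.mem_singleton_iff]
      rw [hRP]
      exact ENNReal.ofReal_le_ofReal (hPeps _ _ _ (hτpos e he).ne')
    _ ≤ _ := measure_mono fun ω hω => hFirr _ fun e he => by
      have hRe : R (τ e) e.2 e.1 ω = 1 := by
        simpa using Set.mem_iInter₂.mp hω _ (Finset.mem_image_of_mem _ he)
      exact sum_Wof_pos (hR ω) (hτI e he) (hRe ▸ one_pos)

/-- In the random model, for every `t ≥ 0`, the probability that
`∑_{t'=tB}^{(t+1)B-1} W(t')` is irreducible is at least `ε^{2(n-1)}`. -/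
theorem random_model_irreducible_prob
    {Ω : Type*} [MeasurableSpace Ω] (μ : MeasureTheory.Measure Ω)
    [MeasureTheory.IsProbabilityMeasure μ]
    {n : ℕ} (hn : 2 ≤ n) (ε : ℝ) (hε : 0 < ε) (B : ℕ) (hB : 1 ≤ B)
    (P : ℕ → Matrix (Fin n) (Fin n) ℝ)
    (hP01 : ∀ t i j, P t i j ∈ Set.Icc (0:ℝ) 1)
    (hPdiag : ∀ t i, P t i i = 1)
    (hPeps : ∀ t i j, P t i j ≠ 0 → ε ≤ P t i j)
    (hPirr : ∀ t : ℕ, IrreducibleMat (∑ t' ∈ Finset.Ico (t * B) ((t + 1) * B), P t'))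
    (R : ℕ → Fin n → Fin n → Ω → ℝ)
    (hRmeas : ∀ t i j, Measurable (R t i j))
    (hR01 : ∀ t i j ω, R t i j ω = 0 ∨ R t i j ω = 1)
    (hRP : ∀ t i j, μ {ω | R t i j ω = 1} = ENNReal.ofReal (P t i j))
    (hindep : ProbabilityTheory.iIndepFun
      (m := fun _ : ℕ × Fin n × Fin n => Real.measurableSpace)
      (fun p ω => R p.1 p.2.1 p.2.2 ω) μ)
    :
    ∀ t : ℕ, ENNReal.ofReal (ε ^ (2 * (n - 1))) ≤
      μ {ω | IrreducibleMat (∑ t' ∈ Finset.Ico (t * B) ((t + 1) * B), Wof R t' ω)} :=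
  random_model_irreducible_prob_general μ hn ε hε B P hPdiag hPeps hPirr R hR01 hRP hindep
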